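/- arXiv:1909.12175 — 2 statements merged into one kernel-verified Lean document; each statement's English description precedes it below -/
import Mathlib

section
/- Suppose X = (X_1,…,X_5) are random variables with values in F_3 such that for all distinct a,b,c,d,e with {a,b,c,d,e} = {1,…,5}, the conditional entropy H(X_a, X_b, X_c | X_d, X_e) = 0 and H(X_d, X_e) = 2 (entropies in base 3). Then for every outcome x ∈ F_3^5, P(X = x) ∈ {0, 1/9}. -/
open scoped Classical BigOperators

/-- Shannon entropy in base `q` of a probability mass function on a finite type. -/
noncomputable def shannonEntropy {α : Type*} [Fintype α] (q : ℝ) (μ : PMF α) : ℝ :=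
  -∑ x : α, (μ x).toReal * Real.logb q (μ x).toReal

/-- Marginal of a distribution on `ι → α` on the coordinates in `S`. -/
noncomputable def marg {ι α : Type*} (μ : PMF (ι → α)) (S : Finset ι) :
    PMF ({ i // i ∈ S } → α) :=
  μ.map fun x i => x i.1

/-!
Taking `{d, e} = {0, 1}`, the full distribution and its `(X₀, X₁)`-marginal both have entropy
`2 = log₃ 9`. Nine outcomes and maximal entropy force the marginal to be uniform, so every atom
of `μ` has mass at most `1/9`, its fibre's mass. An atom `p ≤ 1/9` contributes
`-p log₃ p ≥ 2p` to the entropy, with equality only for `p ∈ {0, 1/9}`; since these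
contributions add up to exactly `2 = ∑ 2p`, equality holds at every atom.
-/

open Real

namespace PMF

variable {α β : Type*}

lemma sum_toReal [Fintype α] (μ : PMF α) : ∑ x, (μ x).toReal = 1 := by
  rw [← ENNReal.toReal_sum fun x _ => μ.apply_ne_top x, ← tsum_fintype (L := .unconditional _),
    μ.tsum_coe, ENNReal.toReal_one]

lemma apply_le_map_apply (μ : PMF α) (f : α → β) (x : α) : μ x ≤ μ.map f (f x) := by
  rw [map_apply]
  exact le_of_eq_of_le (if_pos rfl).symm (ENNReal.le_tsum x)

lemma map_equiv_apply (μ : PMF α) (e : α ≃ β) (y : β) : μ.map e y = μ (e.symm y) := by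
  rw [map_apply, tsum_eq_single (e.symm y)]
  · simp
  · intro x hx
    rw [if_neg (by rintro rfl; simp at hx)]

end PMF

section Entropy

variable {α β : Type*} [Fintype α]

lemma shannonEntropy_eq_sum_negMulLog_div (q : ℝ) (μ : PMF α) :
    shannonEntropy q μ = (∑ x, negMulLog (μ x).toReal) / log q := by
  simp only [shannonEntropy, negMulLog, logb, Finset.sum_div, ← Finset.sum_neg_distrib]
  congr! 1 with x
  ring

lemma shannonEntropy_eq_logb_iff {q : ℝ} (hq : log q ≠ 0) (μ : PMF α) (a : ℝ) :
    shannonEntropy q μ = logb q a ↔ ∑ x, negMulLog (μ x).toReal = log a := by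
  rw [shannonEntropy_eq_sum_negMulLog_div, logb, div_left_inj' hq]

lemma shannonEntropy_map_equiv [Fintype β] (q : ℝ) (μ : PMF α) (e : α ≃ β) :
    shannonEntropy q (μ.map e) = shannonEntropy q μ := by
  simp only [shannonEntropy, PMF.map_equiv_apply]
  congr 1
  exact Fintype.sum_equiv e.symm _ _ fun _ => rfl

lemma shannonEntropy_marg_of_forall_mem {ι : Type*} [Fintype ι] [DecidableEq ι] (q : ℝ)
    (μ : PMF (ι → α)) {S : Finset ι} (hS : ∀ i, i ∈ S) :
    shannonEntropy q (marg μ S) = shannonEntropy q μ :=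
  shannonEntropy_map_equiv q μ ((Equiv.subtypeUnivEquiv hS).symm.arrowCongr (.refl α))

theorem toReal_apply_eq_inv_card_of_shannonEntropy_eq_logb_card {q : ℝ} (hq : log q ≠ 0)
    (μ : PMF α) (hH : shannonEntropy q μ = logb q (Fintype.card α)) (x : α) :
    (μ x).toReal = (Fintype.card α : ℝ)⁻¹ := by
  rw [shannonEntropy_eq_logb_iff hq] at hH
  have hn : (0 : ℝ) < Fintype.card α := by
    have : Nonempty α := ⟨μ.support_nonempty.some⟩
    exact_mod_cast Fintype.card_pos
  set w : α → ℝ := fun _ => (Fintype.card α : ℝ)⁻¹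
  have hw : ∑ y, w y = 1 := by simp [w, Finset.card_univ, hn.ne']
  have hmean : ∑ y, w y • (μ y).toReal = (Fintype.card α : ℝ)⁻¹ := by
    simp [w, ← Finset.mul_sum, PMF.sum_toReal]
  have hjensen :
      negMulLog (∑ y, w y • (μ y).toReal) = ∑ y, w y • negMulLog (μ y).toReal := by
    rw [hmean]
    simp only [w, smul_eq_mul, ← Finset.mul_sum]
    rw [hH, negMulLog, log_inv]
    ring
  rw [strictConcaveOn_negMulLog.map_sum_eq_iff (fun _ _ => inv_pos.2 hn) hw
    (fun _ _ => Set.mem_Ici.2 ENNReal.toReal_nonneg)] at hjensen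
  rw [hjensen x (Finset.mem_univ x), hmean]

theorem toReal_apply_eq_zero_or_eq_of_shannonEntropy_eq_logb_inv {q c : ℝ} (hq : log q ≠ 0)
    (hc : 0 < c) (μ : PMF α) (hle : ∀ x, (μ x).toReal ≤ c)
    (hH : shannonEntropy q μ = logb q c⁻¹) (x : α) :
    (μ x).toReal = 0 ∨ (μ x).toReal = c := by
  rw [shannonEntropy_eq_logb_iff hq, log_inv] at hH
  have hterm : ∀ y ∈ Finset.univ, -((μ y).toReal * log c) ≤ negMulLog (μ y).toReal := by
    intro y _
    rcases ENNReal.toReal_nonneg.eq_or_lt with h0 | hpos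
    · rw [← h0]; simp
    · rw [negMulLog, neg_mul, neg_le_neg_iff]
      exact mul_le_mul_of_nonneg_left (log_le_log hpos (hle y)) hpos.le
  have hsum : ∑ y, -((μ y).toReal * log c) = ∑ y, negMulLog (μ y).toReal := by
    rw [hH, Finset.sum_neg_distrib, ← Finset.sum_mul, PMF.sum_toReal, one_mul]
  have hx := (Finset.sum_eq_sum_iff_of_le hterm).1 hsum x (Finset.mem_univ x)
  rcases ENNReal.toReal_nonneg.eq_or_lt with h0 | hpos
  · exact Or.inl h0.symm
  · right
    rw [negMulLog, neg_mul, neg_inj] at hx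
    exact log_injOn_pos hpos hc (mul_left_cancel₀ hpos.ne' hx).symm

end Entropy

/-- If `X = (X_1,…,X_5)` are `F_3`-valued random variables such that for every choice
of distinct `a,b,c,d,e` covering `{1,…,5}` we have `H(X_a,X_b,X_c | X_d,X_e) = 0` and
`H(X_d,X_e) = 2` (base-3 entropies), then every outcome has probability `0` or `1/9`. -/
theorem entropic_U25_outcome_probs (μ : PMF (Fin 5 → ZMod 3))
    (h : ∀ a b c d e : Fin 5, ({a, b, c, d, e} : Finset (Fin 5)) = Finset.univ →
      shannonEntropy 3 (marg μ ({d, e} : Finset (Fin 5))) = 2 ∧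
      shannonEntropy 3 (marg μ ({a, b, c, d, e} : Finset (Fin 5))) -
        shannonEntropy 3 (marg μ ({d, e} : Finset (Fin 5))) = 0) :
    ∀ x : Fin 5 → ZMod 3, μ x = 0 ∨ μ x = 1 / 9 := by
  intro x
  have hU : ({2, 3, 4, 0, 1} : Finset (Fin 5)) = Finset.univ := by decide
  obtain ⟨hpair, hfull⟩ := h 2 3 4 0 1 hU
  rw [shannonEntropy_marg_of_forall_mem 3 μ (Finset.eq_univ_iff_forall.1 hU), hpair,
    sub_eq_zero] at hfull
  have hlog3 : log 3 ≠ 0 := (log_pos (by norm_num)).ne'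
  have hlogb : logb 3 9 = 2 := by
    rw [show (9 : ℝ) = 3 ^ (2 : ℝ) by norm_num, logb_rpow (by norm_num) (by norm_num)]
  have hcard : Fintype.card (({0, 1} : Finset (Fin 5)) → ZMod 3) = 9 := by
    rw [Fintype.card_fun, Fintype.card_coe, ZMod.card]
    rfl
  have huniform := toReal_apply_eq_inv_card_of_shannonEntropy_eq_logb_card hlog3
    (marg μ {0, 1}) (by rw [hpair, hcard]; exact_mod_cast hlogb.symm)
  rw [hcard, Nat.cast_ofNat] at huniform
  have hle : ∀ z, (μ z).toReal ≤ 9⁻¹ := fun z =>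
    (ENNReal.toReal_mono (PMF.apply_ne_top _ _) (μ.apply_le_map_apply _ z)).trans_eq (huniform _)
  rcases toReal_apply_eq_zero_or_eq_of_shannonEntropy_eq_logb_inv hlog3 (by norm_num) μ hle
      (by rw [hfull, inv_inv, hlogb]) x with h0 | h9
  · exact Or.inl ((ENNReal.toReal_eq_zero_iff _).1 h0 |>.resolve_right (μ.apply_ne_top x))
  · right
    rw [← ENNReal.ofReal_toReal (μ.apply_ne_top x), h9, ENNReal.ofReal_inv_of_pos (by norm_num),
      one_div, ENNReal.ofReal_ofNat]
end

section
/- Let X_1, X_2, X_3, X_7 be F_3-valued random variables, each uniform, such that H(X_1,X_2,X_3)=3, H(X_2,X_3,X_7)=2 with H(X_7 | X_2, X_3) = 0, and H(X_7 | X_1, X_1 + X_2 + X_3) = 0 (all entropies base 3). Then H(X_7 | X_2 + X_3) = 0 and H(X_2 + X_3 | X_7) = 0, i.e., X_7 and X_2 + X_3 determine each other. -/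
open scoped Classical BigOperators

/-!
Write `X₁, X₂, X₃, X₇` for the coordinates `0, 1, 2, 3` of `μ`. A pushforward of a distribution
has the same entropy only if the map is injective on the support, so the two conditional
entropy hypotheses say that on the support `X₇` is a function of `(X₂, X₃)` and of
`(X₁, X₁ + X₂ + X₃)`. Maximal entropy forces `(X₁, X₂, X₃)` to be uniform, so every triple
occurs; comparing the atoms over `(x₁, x₂ + x₃, 0)` and `(0, x₂ + x₃, 0)` gives `X₇ = h (X₂ + X₃)`.
Since `X₇` is uniform, `h` is a bijection of `𝔽₃`, and `(X₂ + X₃, X₇)` is an injective image of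
`X₂ + X₃` as well as of `X₇`.
-/

open Real Finset

namespace PMF
variable {α β : Type*}

lemma sum_toReal_eq_one [Fintype α] (μ : PMF α) : ∑ a, (μ a).toReal = 1 := by
  have h := μ.tsum_coe
  rw [tsum_fintype] at h
  rw [← ENNReal.toReal_sum fun a _ => μ.apply_ne_top a, h, ENNReal.toReal_one]

lemma toReal_map_apply [Fintype α] (μ : PMF α) (f : α → β) (b : β) :
    ((μ.map f) b).toReal = ∑ a with f a = b, (μ a).toReal := by
  rw [map_apply, tsum_fintype, ENNReal.toReal_sum fun a _ => by split <;> simp [apply_ne_top],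
    sum_filter]
  exact sum_congr rfl fun a _ => by split <;> simp_all [eq_comm]

lemma map_eq_map_of_eqOn_support (μ : PMF α) {f g : α → β} (h : Set.EqOn f g μ.support) :
    μ.map f = μ.map g := by
  ext b
  simp only [map_apply]
  refine tsum_congr fun a => ?_
  by_cases ha : μ a = 0
  · simp [ha]
  · rw [h ((μ.mem_support_iff a).2 ha)]

end PMF

lemma shannonEntropy_eq_sum_negMulLog {α : Type*} [Fintype α] (q : ℝ) (μ : PMF α) :
    shannonEntropy q μ = (∑ a, negMulLog (μ a).toReal) / log q := by
  simp only [shannonEntropy, negMulLog, logb, sum_div, ← sum_neg_distrib]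
  exact sum_congr rfl fun a _ => by ring

lemma neg_mul_log_le_negMulLog {x y : ℝ} (hx : 0 ≤ x) (hxy : x ≤ y) :
    -x * log y ≤ negMulLog x := by
  rcases hx.eq_or_lt with rfl | hx
  · simp
  · rw [negMulLog]
    nlinarith [log_le_log hx hxy]

lemma negMulLog_sum_le {ι : Type*} (s : Finset ι) {p : ι → ℝ} (hp : ∀ i ∈ s, 0 ≤ p i) :
    negMulLog (∑ i ∈ s, p i) ≤ ∑ i ∈ s, negMulLog (p i) := by
  calc negMulLog (∑ i ∈ s, p i) = ∑ i ∈ s, -p i * log (∑ j ∈ s, p j) := by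
        rw [negMulLog, ← sum_mul, ← sum_neg_distrib]
    _ ≤ _ := sum_le_sum fun i hi =>
        neg_mul_log_le_negMulLog (hp i hi) (single_le_sum hp hi)

lemma eq_sum_of_negMulLog_sum_eq {ι : Type*} {s : Finset ι} {p : ι → ℝ}
    (hp : ∀ i ∈ s, 0 ≤ p i) (h : negMulLog (∑ i ∈ s, p i) = ∑ i ∈ s, negMulLog (p i))
    {i : ι} (hi : i ∈ s) (hpi : 0 < p i) : p i = ∑ j ∈ s, p j := by
  have hterm := (sum_eq_sum_iff_of_le fun j hj =>
    neg_mul_log_le_negMulLog (hp j hj) (single_le_sum hp hj)).1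
    (by rw [← h, negMulLog, ← sum_mul, ← sum_neg_distrib]) i hi
  have hsum : 0 < ∑ j ∈ s, p j := hpi.trans_le (single_le_sum hp hi)
  refine log_injOn_pos hpi hsum ?_
  rw [negMulLog] at hterm
  have := mul_left_cancel₀ (neg_ne_zero.2 hpi.ne') hterm
  linarith

section Entropy
variable {α β γ δ : Type*} {q : ℝ}

lemma sum_negMulLog_map_le [Fintype α] [Fintype β] (μ : PMF α) (f : α → β) :
    ∑ b, negMulLog ((μ.map f) b).toReal ≤ ∑ a, negMulLog (μ a).toReal := by
  rw [← sum_fiberwise univ f]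
  gcongr with b
  rw [PMF.toReal_map_apply]
  exact negMulLog_sum_le _ fun a _ => ENNReal.toReal_nonneg

lemma shannonEntropy_map_le [Fintype α] [Fintype β] (hq : 1 < q) (μ : PMF α) (f : α → β) :
    shannonEntropy q (μ.map f) ≤ shannonEntropy q μ := by
  simp only [shannonEntropy_eq_sum_negMulLog]
  exact div_le_div_of_nonneg_right (sum_negMulLog_map_le μ f) (log_pos hq).le

lemma shannonEntropy_map_of_injective [Fintype α] [Fintype β] (hq : 1 < q) (μ : PMF α)
    {f : α → β} (hf : Function.Injective f) : shannonEntropy q (μ.map f) = shannonEntropy q μ := by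
  have : Nonempty α := μ.support_nonempty.to_type
  obtain ⟨g, hg⟩ := hf.hasLeftInverse
  refine (shannonEntropy_map_le hq μ f).antisymm ?_
  calc shannonEntropy q μ = shannonEntropy q ((μ.map f).map g) := by
        rw [PMF.map_comp, hg.comp_eq_id, PMF.map_id]
    _ ≤ shannonEntropy q (μ.map f) := shannonEntropy_map_le hq _ g

lemma shannonEntropy_map_eq_of_eqOn_comp [Fintype β] [Fintype γ] (hq : 1 < q) (μ : PMF α)
    {F : α → γ} {f : α → β} {e : β → γ} (he : Function.Injective e)
    (hF : Set.EqOn F (e ∘ f) μ.support) :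
    shannonEntropy q (μ.map F) = shannonEntropy q (μ.map f) := by
  rw [μ.map_eq_map_of_eqOn_support hF, ← PMF.map_comp, shannonEntropy_map_of_injective hq _ he]

lemma injOn_support_of_shannonEntropy_map_eq [Fintype α] [Fintype β] (hq : 1 < q) (μ : PMF α)
    {f : α → β} (h : shannonEntropy q (μ.map f) = shannonEntropy q μ) : Set.InjOn f μ.support := by
  simp only [shannonEntropy_eq_sum_negMulLog] at h
  have hsum := (div_left_inj' (log_pos hq).ne').1 h
  rw [← sum_fiberwise univ f fun a => negMulLog (μ a).toReal] at hsum
  have hfiber := (sum_eq_sum_iff_of_le fun b _ => (μ.toReal_map_apply f b).symm ▸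
    negMulLog_sum_le _ fun a _ => ENNReal.toReal_nonneg).1 hsum
  -- Equality holds fiber by fiber, so an atom of the support carries the whole mass of its fiber.
  intro a ha a' ha' hfa
  by_contra hne
  have hmem : ∀ {x}, f x = f a → x ∈ univ.filter (f · = f a) := by simp
  have hpos : ∀ {x}, x ∈ μ.support → 0 < (μ x).toReal := fun hx =>
    ENNReal.toReal_pos ((μ.mem_support_iff _).1 hx) (μ.apply_ne_top _)
  have heq := eq_sum_of_negMulLog_sum_eq (fun x _ => ENNReal.toReal_nonneg)
    (by rw [← μ.toReal_map_apply]; exact hfiber (f a) (mem_univ _)) (hmem rfl) (hpos ha)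
  have hle := sum_le_sum_of_subset_of_nonneg
    (insert_subset (hmem rfl) (singleton_subset_iff.2 (hmem hfa.symm)))
    fun x _ _ => ENNReal.toReal_nonneg (a := μ x)
  rw [sum_pair hne] at hle
  linarith [hpos ha']


lemma eq_uniformOfFintype_of_shannonEntropy_eq [Fintype α] [Nonempty α]
    (hq : 1 < q) (μ : PMF α) (h : shannonEntropy q μ = logb q (Fintype.card α)) :
    μ = PMF.uniformOfFintype α := by
  set n : ℝ := (Fintype.card α : ℝ)
  have hn : 0 < n := by positivity
  have hjensen : negMulLog (∑ a, n⁻¹ • (μ a).toReal) ≤ ∑ a, n⁻¹ • negMulLog (μ a).toReal := by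
    rw [shannonEntropy_eq_sum_negMulLog, logb, div_left_inj' (log_pos hq).ne'] at h
    simp only [smul_eq_mul, ← mul_sum, μ.sum_toReal_eq_one, mul_one, h]
    simp [negMulLog, log_inv]
  have hconst := strictConcaveOn_negMulLog.eq_of_map_sum_eq (fun _ _ => inv_pos.2 hn)
    (by simp [n, hn.ne']) (fun a _ => Set.mem_Ici.2 ENNReal.toReal_nonneg) hjensen
  have hval : ∀ a, (μ a).toReal = n⁻¹ := fun a => by
    have := μ.sum_toReal_eq_one
    rw [sum_congr rfl fun b _ => hconst (mem_univ b) (mem_univ a), sum_const, card_univ,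
      nsmul_eq_mul] at this
    field_simp; linarith
  ext a
  rw [PMF.uniformOfFintype_apply, ← ENNReal.ofReal_toReal (μ.apply_ne_top a), hval,
    ENNReal.ofReal_inv_of_pos hn, ENNReal.ofReal_natCast]

lemma exists_mem_support_of_shannonEntropy_map_eq [Fintype β] [Nonempty β] (hq : 1 < q)
    (μ : PMF α) (f : α → β)
    (h : shannonEntropy q (μ.map f) = logb q (Fintype.card β)) (b : β) :
    ∃ a ∈ μ.support, f a = b := by
  rw [← PMF.mem_support_map_iff, eq_uniformOfFintype_of_shannonEntropy_eq hq _ h]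
  exact PMF.mem_support_uniformOfFintype b

lemma apply_eq_of_shannonEntropy_map_eq [Fintype α] [Fintype β] [Fintype γ] [Fintype δ]
    (hq : 1 < q) (μ : PMF α) (f : α → β) (g : α → γ) (k : α → δ)
    (h : shannonEntropy q (μ.map fun x => (f x, g x, k x)) =
      shannonEntropy q (μ.map fun x => (f x, g x)))
    {x y : α} (hx : x ∈ μ.support) (hy : y ∈ μ.support) (hf : f x = f y) (hg : g x = g y) :
    k x = k y := by
  have hinj := injOn_support_of_shannonEntropy_map_eq hq (μ.map fun x => (f x, g x, k x))
    (f := fun t => (t.1, t.2.1)) (by rw [PMF.map_comp]; exact h.symm)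
  have hxy := hinj ((PMF.mem_support_map_iff _ _ _).2 ⟨x, hx, rfl⟩)
    ((PMF.mem_support_map_iff _ _ _).2 ⟨y, hy, rfl⟩) (by simp only [hf, hg])
  simp only [Prod.mk.injEq] at hxy
  exact hxy.2.2

lemma exists_eq_apply_add_of_determined {α β G : Type*} [AddMonoid G] {S : Set α}
    {x₀ x₁ x₂ : α → G} {y : α → β}
    (hS : ∀ a b c, ∃ x ∈ S, x₀ x = a ∧ x₁ x = b ∧ x₂ x = c)
    (h₁₂ : ∀ x ∈ S, ∀ x' ∈ S, x₁ x = x₁ x' → x₂ x = x₂ x' → y x = y x')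
    (h₀s : ∀ x ∈ S, ∀ x' ∈ S, x₀ x = x₀ x' →
      x₀ x + x₁ x + x₂ x = x₀ x' + x₁ x' + x₂ x' → y x = y x') :
    ∃ h : G → β, ∀ x ∈ S, y x = h (x₁ x + x₂ x) := by
  choose z hzS hz₀ hz₁ hz₂ using hS
  refine ⟨fun s => y (z 0 s 0), fun x hx => ?_⟩
  calc y x = y (z (x₀ x) (x₁ x + x₂ x) 0) :=
        h₀s _ hx _ (hzS _ _ _) (hz₀ _ _ _).symm (by rw [hz₀, hz₁, hz₂, add_zero, add_assoc])
    _ = y (z 0 (x₁ x + x₂ x) 0) :=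
        h₁₂ _ (hzS _ _ _) _ (hzS _ _ _) (by rw [hz₁, hz₁]) (by rw [hz₂, hz₂])

theorem fano_key_step_general (μ : PMF (Fin 4 → ZMod 3))
    (huniform : ∀ i : Fin 4, shannonEntropy 3 (μ.map fun x => x i) = 1)
    (h123 : shannonEntropy 3 (μ.map fun x => (x 0, x 1, x 2)) = 3)
    (h7given23 : shannonEntropy 3 (μ.map fun x => (x 1, x 2, x 3)) -
      shannonEntropy 3 (μ.map fun x => (x 1, x 2)) = 0)
    (h7given1sum : shannonEntropy 3 (μ.map fun x => (x 0, x 0 + x 1 + x 2, x 3)) -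
      shannonEntropy 3 (μ.map fun x => (x 0, x 0 + x 1 + x 2)) = 0) :
    shannonEntropy 3 (μ.map fun x => (x 1 + x 2, x 3)) -
      shannonEntropy 3 (μ.map fun x => x 1 + x 2) = 0 ∧
    shannonEntropy 3 (μ.map fun x => (x 1 + x 2, x 3)) -
      shannonEntropy 3 (μ.map fun x => x 3) = 0 := by
  have hq : (1 : ℝ) < 3 := by norm_num
  have hcover (a b c : ZMod 3) : ∃ x ∈ μ.support, x 0 = a ∧ x 1 = b ∧ x 2 = c := by
    have hcard : logb 3 (Fintype.card (ZMod 3 × ZMod 3 × ZMod 3)) = 3 := by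
      simp [show (27 : ℝ) = 3 ^ 3 by norm_num, logb_pow]
    obtain ⟨x, hx, hxabc⟩ := exists_mem_support_of_shannonEntropy_map_eq hq μ _
      (h123.trans hcard.symm) (a, b, c)
    simp only [Prod.mk.injEq] at hxabc
    exact ⟨x, hx, hxabc⟩
  obtain ⟨h, hh⟩ := exists_eq_apply_add_of_determined hcover
    (fun x hx y hy =>
      apply_eq_of_shannonEntropy_map_eq hq μ _ _ _ (sub_eq_zero.1 h7given23) hx hy)
    (fun x hx y hy =>
      apply_eq_of_shannonEntropy_map_eq hq μ _ _ _ (sub_eq_zero.1 h7given1sum) hx hy)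
  have hsurj : Function.Surjective h := fun c => by
    obtain ⟨x, hx, rfl⟩ := exists_mem_support_of_shannonEntropy_map_eq hq μ (· 3)
      (by simpa using huniform 3) c
    exact ⟨_, (hh x hx).symm⟩
  let e := Equiv.ofBijective h ⟨Finite.injective_iff_surjective.2 hsurj, hsurj⟩
  refine ⟨sub_eq_zero.2 ?_, sub_eq_zero.2 ?_⟩
  · refine shannonEntropy_map_eq_of_eqOn_comp hq μ (e := fun s => (s, h s))
      (fun s t hst => congrArg Prod.fst hst) fun x hx => ?_
    simp [hh x hx]
  · refine shannonEntropy_map_eq_of_eqOn_comp hq μ (e := fun c => (e.symm c, c))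
      (fun c d hcd => congrArg Prod.snd hcd) fun x hx => ?_
    simp only [Function.comp_apply, hh x hx, Prod.mk.injEq, and_true]
    exact (e.symm_apply_apply _).symm

/-- Let `X_1, X_2, X_3, X_7` be `F_3`-valued random variables (coordinates `0,1,2,3` of
`μ`), each uniform, with `H(X_1,X_2,X_3) = 3`, `H(X_2,X_3,X_7) = 2`,
`H(X_7 | X_2,X_3) = 0` and `H(X_7 | X_1, X_1+X_2+X_3) = 0` (base-3 entropies). Then
`H(X_7 | X_2+X_3) = 0` and `H(X_2+X_3 | X_7) = 0`, i.e. `X_7` and `X_2 + X_3` determine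
each other. -/
theorem fano_key_step (μ : PMF (Fin 4 → ZMod 3))
    (huniform : ∀ i : Fin 4, shannonEntropy 3 (μ.map fun x => x i) = 1)
    (h123 : shannonEntropy 3 (μ.map fun x => (x 0, x 1, x 2)) = 3)
    (h237 : shannonEntropy 3 (μ.map fun x => (x 1, x 2, x 3)) = 2)
    (h7given23 : shannonEntropy 3 (μ.map fun x => (x 1, x 2, x 3)) -
      shannonEntropy 3 (μ.map fun x => (x 1, x 2)) = 0)
    (h7given1sum : shannonEntropy 3 (μ.map fun x => (x 0, x 0 + x 1 + x 2, x 3)) -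
      shannonEntropy 3 (μ.map fun x => (x 0, x 0 + x 1 + x 2)) = 0) :
    shannonEntropy 3 (μ.map fun x => (x 1 + x 2, x 3)) -
      shannonEntropy 3 (μ.map fun x => x 1 + x 2) = 0 ∧
    shannonEntropy 3 (μ.map fun x => (x 1 + x 2, x 3)) -
      shannonEntropy 3 (μ.map fun x => x 3) = 0 :=
  fano_key_step_general μ huniform h123 h7given23 h7given1sum
end Entropy
end
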